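/- arXiv:1103.2470 — 2 statements merged into one kernel-verified Lean document; each statement's English description precedes it below -/
import Mathlib

section
/- Suppose f : ℝ → ℝ is continuous with f(0) = 0 and ψ·f(ψ) < 0 for all ψ ∈ (0, δ]. If ψ : [r₀, r₁] → ℝ satisfies the integral equation ψ(r) = r₀ψ₁ ln(r/r₀) - ∫_{r₀}^{r} τ ln(r/τ) f(ψ(τ)) dτ with ψ₁ > 0, r₀ ≥ 1, and ψ(r) ∈ (0, δ] for r ∈ (r₀, r₁], then ψ(r) ≥ r₀ψ₁ ln(r/r₀) for all r ∈ [r₀, r₁]. -/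
open Real Set

theorem stmt4 (r₀ r₁ ψ₁ δ : ℝ) (hr₀ : 1 ≤ r₀) (hr₁ : r₀ < r₁)
    (hψ₁ : 0 < ψ₁) (hδ : 0 < δ)
    (f : ℝ → ℝ) (hf : Continuous f) (hf0 : f 0 = 0)
    (hsign : ∀ ψ ∈ Ioc (0:ℝ) δ, ψ * f ψ < 0)
    (ψ : ℝ → ℝ) (hψc : ContinuousOn ψ (Icc r₀ r₁))
    (hrange : ∀ r ∈ Ioc r₀ r₁, ψ r ∈ Ioc (0:ℝ) δ)
    (hinteq : ∀ r ∈ Icc r₀ r₁,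
      ψ r = r₀ * ψ₁ * Real.log (r / r₀)
        - ∫ τ in r₀..r, τ * Real.log (r / τ) * f (ψ τ)) :
    ∀ r ∈ Icc r₀ r₁, r₀ * ψ₁ * Real.log (r / r₀) ≤ ψ r := by
  intro r hr
  have hr0pos : (0:ℝ) < r₀ := lt_of_lt_of_le one_pos hr₀
  have key : (0:ℝ) ≤ - ∫ τ in r₀..r, τ * Real.log (r / τ) * f (ψ τ) := by
    rw [← intervalIntegral.integral_neg]
    apply intervalIntegral.integral_nonneg hr.1
    intro u hu
    rw [neg_nonneg]
    rcases eq_or_lt_of_le hu.1 with h | h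
    · -- u = r₀, ψ r₀ = 0 from the integral equation at r₀
      have hψr₀ : ψ r₀ = 0 := by
        have := hinteq r₀ ⟨le_refl _, le_of_lt hr₁⟩
        rw [div_self hr0pos.ne', Real.log_one, mul_zero] at this
        simpa using this
      rw [← h, hψr₀, hf0, mul_zero]
    · have hψu := hrange u ⟨h, le_trans hu.2 hr.2⟩
      have hfneg : f (ψ u) < 0 := by
        have := hsign (ψ u) hψu
        nlinarith [hψu.1]
      have hupos : (0:ℝ) < u := lt_trans hr0pos h
      have hlog : 0 ≤ Real.log (r / u) := by
        apply Real.log_nonneg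
        rw [le_div_iff₀ hupos]; linarith [hu.2]
      have : 0 ≤ u * Real.log (r / u) := mul_nonneg hupos.le hlog
      exact mul_nonpos_of_nonneg_of_nonpos this hfneg.le
  have heq := hinteq r hr
  linarith
end

section
/- Let f : ℝ → ℝ be continuous with f(0) = 0, ψ·f(ψ) < 0 for all ψ ∈ [-δ,0)∪(0,δ], and |f(ψ₁) - f(ψ₂)| ≤ (C/√(min{|ψ₁|,|ψ₂|}))·|ψ₁ - ψ₂| for all ψ₁, ψ₂ ∈ [-δ,0)∪(0,δ] with ψ₁ψ₂ > 0, for some C, δ > 0. Then for any r₀ ≥ 1 and ψ₁ > 0, the initial value problem ψ'' + ψ'/r + f(ψ) = 0, ψ(r₀) = 0, ψ'(r₀) = ψ₁ has at most one C² solution on any interval [r₀, r₁] on which the solution values lie in (0, δ] for r ∈ (r₀, r₁]. -/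
open Real Set

/-- Local uniqueness step: if `w(t)=0`, `w'(t)=0` and `|w''| ≤ |w'| + Q/√(σ-t)·|w|`
on a small interval, then `w ≡ 0` there. -/
lemma step_lemma (t ε Q : ℝ) (hε : 0 < ε) (hQ : 0 ≤ Q)
    (hsmall : (1 + Q * Real.sqrt ε) * ε ≤ 1/2)
    (w w' w'' : ℝ → ℝ)
    (hd1 : ∀ σ ∈ Icc t (t+ε), HasDerivAt w (w' σ) σ)
    (hd2 : ∀ σ ∈ Icc t (t+ε), HasDerivAt w' (w'' σ) σ)
    (hw0 : w t = 0) (hw'0 : w' t = 0)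
    (hbound : ∀ σ ∈ Icc t (t+ε), |w'' σ| ≤ |w' σ| + Q / Real.sqrt (σ - t) * |w σ|) :
    ∀ σ ∈ Icc t (t+ε), w σ = 0 := by
  have htK : t ∈ Icc t (t+ε) := left_mem_Icc.2 (by linarith)
  have hconv : Convex ℝ (Icc t (t+ε)) := convex_Icc _ _
  have hcw' : ContinuousOn (fun σ => |w' σ|) (Icc t (t+ε)) :=
    fun σ hσ => ((hd2 σ hσ).continuousAt.continuousWithinAt).abs
  obtain ⟨σs, hσs, hmax⟩ :=
    isCompact_Icc.exists_isMaxOn ⟨t, htK⟩ hcw'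
  set M := |w' σs| with hM
  have hM0 : 0 ≤ M := abs_nonneg _
  have hw'le : ∀ σ ∈ Icc t (t+ε), |w' σ| ≤ M := fun σ hσ => hmax hσ
  have hwMVT : ∀ σ ∈ Icc t (t+ε), |w σ| ≤ M * (σ - t) := by
    intro σ hσ
    have := Convex.norm_image_sub_le_of_norm_hasDerivWithin_le
      (f := w) (f' := w') (s := Icc t (t+ε)) (C := M)
      (fun x hx => (hd1 x hx).hasDerivWithinAt) (fun x hx => hw'le x hx) hconv htK hσ
    simpa [hw0, abs_of_nonneg (show (0:ℝ) ≤ σ - t by linarith [hσ.1])] using this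
  have hw''b : ∀ σ ∈ Icc t (t+ε), |w'' σ| ≤ M * (1 + Q * Real.sqrt ε) := by
    intro σ hσ
    have h1 : Q / Real.sqrt (σ - t) * |w σ| ≤ Q * M * Real.sqrt (σ - t) := by
      calc Q / Real.sqrt (σ - t) * |w σ|
          ≤ Q / Real.sqrt (σ - t) * (M * (σ - t)) := by
            exact mul_le_mul_of_nonneg_left (hwMVT σ hσ)
              (div_nonneg hQ (Real.sqrt_nonneg _))
        _ = Q * M * ((σ - t) / Real.sqrt (σ - t)) := by ring
        _ = Q * M * Real.sqrt (σ - t) := by rw [Real.div_sqrt]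
    have h2 : Real.sqrt (σ - t) ≤ Real.sqrt ε := Real.sqrt_le_sqrt (by linarith [hσ.2])
    have h3 : Q * M * Real.sqrt (σ - t) ≤ Q * M * Real.sqrt ε :=
      mul_le_mul_of_nonneg_left h2 (mul_nonneg hQ hM0)
    have := hbound σ hσ
    have h4 := hw'le σ hσ
    nlinarith
  have hMself : M ≤ M * (1 + Q * Real.sqrt ε) * ε := by
    have := Convex.norm_image_sub_le_of_norm_hasDerivWithin_le
      (f := w') (f' := w'') (s := Icc t (t+ε)) (C := M * (1 + Q * Real.sqrt ε))
      (fun x hx => (hd2 x hx).hasDerivWithinAt) (fun x hx => hw''b x hx) hconv htK hσs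
    have hσst : |σs - t| ≤ ε := by
      rw [abs_of_nonneg (by linarith [hσs.1])]; linarith [hσs.2]
    have hnn : 0 ≤ M * (1 + Q * Real.sqrt ε) :=
      mul_nonneg hM0 (by positivity)
    calc M = |w' σs - w' t| := by rw [hw'0, sub_zero]
      _ ≤ M * (1 + Q * Real.sqrt ε) * |σs - t| := this
      _ ≤ M * (1 + Q * Real.sqrt ε) * ε := mul_le_mul_of_nonneg_left hσst hnn
  have hMz : M = 0 := by nlinarith
  intro σ hσ
  have := Convex.norm_image_sub_le_of_norm_hasDerivWithin_le
    (f := w) (f' := w') (s := Icc t (t+ε)) (C := 0)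
    (fun x hx => (hd1 x hx).hasDerivWithinAt)
    (fun x hx => by simpa [hMz] using hw'le x hx) hconv htK hσ
  have h5 : |w σ - w t| ≤ 0 := by simpa using this
  have h6 : w σ - w t = 0 := by
    have := abs_nonneg (w σ - w t)
    have := abs_le.1 h5
    linarith [this.1, this.2]
  rw [hw0] at h6; linarith

lemma lin_lower_bound (a b c : ℝ) (g g' : ℝ → ℝ)
    (hd : ∀ x ∈ Icc a b, HasDerivAt g (g' x) x)
    (hg' : ∀ x ∈ Icc a b, c ≤ g' x) (hga : g a = 0) :
    ∀ x ∈ Icc a b, c * (x - a) ≤ g x := by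
  intro x hx
  set h : ℝ → ℝ := fun x => g x - c * (x - a) with hh
  have hdh : ∀ y ∈ Icc a b, HasDerivAt h (g' y - c) y := by
    intro y hy
    have h2 : HasDerivAt (fun x => c * (x - a)) c y := by
      simpa using ((hasDerivAt_id y).sub_const a).const_mul c
    exact (hd y hy).sub h2
  have hmono : MonotoneOn h (Icc a b) := by
    apply monotoneOn_of_deriv_nonneg (convex_Icc a b)
    · exact fun y hy => ((hdh y hy).continuousAt.continuousWithinAt)
    · intro y hy
      rw [interior_Icc] at hy
      exact ((hdh y (Ioo_subset_Icc_self hy)).differentiableAt.differentiableWithinAt)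
    · intro y hy
      rw [interior_Icc] at hy
      have := (hdh y (Ioo_subset_Icc_self hy)).deriv
      rw [this]
      linarith [hg' y (Ioo_subset_Icc_self hy)]
  have hax : a ∈ Icc a b := left_mem_Icc.2 (hx.1.trans hx.2)
  have := hmono hax hx hx.1
  simp only [hh, hga] at this
  linarith

theorem stmt9 (C δ r₀ r₁ ψ₁ : ℝ) (hC : 0 < C) (hδ : 0 < δ)
    (hr₀ : 1 ≤ r₀) (hr₁ : r₀ < r₁) (hψ₁ : 0 < ψ₁)
    (f : ℝ → ℝ) (hf : Continuous f) (hf0 : f 0 = 0)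
    (hsign : ∀ ψ : ℝ, ψ ≠ 0 → |ψ| ≤ δ → ψ * f ψ < 0)
    (hlip : ∀ a b : ℝ, a ≠ 0 → b ≠ 0 → |a| ≤ δ → |b| ≤ δ → a * b > 0 →
      |f a - f b| ≤ C / Real.sqrt (min |a| |b|) * |a - b|)
    (ψ ψ' ψ'' Ψ Ψ' Ψ'' : ℝ → ℝ)
    (hd1 : ∀ r ∈ Icc r₀ r₁, HasDerivAt ψ (ψ' r) r)
    (hd2 : ∀ r ∈ Icc r₀ r₁, HasDerivAt ψ' (ψ'' r) r)
    (hcont : ContinuousOn ψ'' (Icc r₀ r₁))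
    (hD1 : ∀ r ∈ Icc r₀ r₁, HasDerivAt Ψ (Ψ' r) r)
    (hD2 : ∀ r ∈ Icc r₀ r₁, HasDerivAt Ψ' (Ψ'' r) r)
    (hCont : ContinuousOn Ψ'' (Icc r₀ r₁))
    (hode : ∀ r ∈ Icc r₀ r₁, ψ'' r + ψ' r / r + f (ψ r) = 0)
    (hOde : ∀ r ∈ Icc r₀ r₁, Ψ'' r + Ψ' r / r + f (Ψ r) = 0)
    (hinit : ψ r₀ = 0) (hinit' : ψ' r₀ = ψ₁)
    (hInit : Ψ r₀ = 0) (hInit' : Ψ' r₀ = ψ₁)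
    (hrange : ∀ r ∈ Ioc r₀ r₁, ψ r ∈ Ioc (0:ℝ) δ)
    (hRange : ∀ r ∈ Ioc r₀ r₁, Ψ r ∈ Ioc (0:ℝ) δ) :
    ∀ r ∈ Icc r₀ r₁, ψ r = Ψ r := by
  have hcψ : ContinuousOn ψ (Icc r₀ r₁) :=
    fun r hr => (hd1 r hr).continuousAt.continuousWithinAt
  have hcψ' : ContinuousOn ψ' (Icc r₀ r₁) :=
    fun r hr => (hd2 r hr).continuousAt.continuousWithinAt
  have hcΨ : ContinuousOn Ψ (Icc r₀ r₁) :=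
    fun r hr => (hD1 r hr).continuousAt.continuousWithinAt
  have hcΨ' : ContinuousOn Ψ' (Icc r₀ r₁) :=
    fun r hr => (hD2 r hr).continuousAt.continuousWithinAt
  set T := {s : ℝ | s ∈ Icc r₀ r₁ ∧ ∀ σ ∈ Icc r₀ s, ψ σ = Ψ σ} with hT
  have hr₀T : r₀ ∈ T := by
    refine ⟨⟨le_refl _, hr₁.le⟩, fun σ hσ => ?_⟩
    have : σ = r₀ := le_antisymm hσ.2 hσ.1
    rw [this, hinit, hInit]
  have hbdd : BddAbove T := ⟨r₁, fun s hs => hs.1.2⟩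
  set t := sSup T with htdef
  have ht₀ : r₀ ≤ t := le_csSup hbdd hr₀T
  have ht₁ : t ≤ r₁ := csSup_le ⟨r₀, hr₀T⟩ fun s hs => hs.1.2
  have htI : t ∈ Icc r₀ r₁ := ⟨ht₀, ht₁⟩
  have hIco : ∀ σ ∈ Ico r₀ t, ψ σ = Ψ σ := by
    intro σ hσ
    obtain ⟨s, hsT, hσs⟩ := exists_lt_of_lt_csSup ⟨r₀, hr₀T⟩ hσ.2
    exact hsT.2 σ ⟨hσ.1, hσs.le⟩
  have hAt : ψ t = Ψ t := by
    rcases eq_or_lt_of_le ht₀ with h | h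
    · rw [← h, hinit, hInit]
    · have hcl : t ∈ closure (Ico r₀ t) := by
        rw [closure_Ico h.ne]; exact right_mem_Icc.2 ht₀
      have hne : (nhdsWithin t (Ico r₀ t)).NeBot :=
        mem_closure_iff_nhdsWithin_neBot.1 hcl
      have hsub : Ico r₀ t ⊆ Icc r₀ r₁ := fun x hx => ⟨hx.1, hx.2.le.trans ht₁⟩
      have h1 : Filter.Tendsto (fun σ => ψ σ - Ψ σ) (nhdsWithin t (Ico r₀ t))
          (nhds (ψ t - Ψ t)) :=
        (((hcψ t htI).sub (hcΨ t htI)).mono hsub).tendsto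
      have h2 : Filter.Tendsto (fun σ => ψ σ - Ψ σ) (nhdsWithin t (Ico r₀ t))
          (nhds 0) := by
        apply Filter.Tendsto.congr' _ tendsto_const_nhds
        filter_upwards [self_mem_nhdsWithin] with x hx
        rw [sub_eq_zero.2 (hIco x hx)]
      have := tendsto_nhds_unique h1 h2
      linarith
  have hA : ∀ σ ∈ Icc r₀ t, ψ σ = Ψ σ := by
    intro σ hσ
    rcases eq_or_lt_of_le hσ.2 with h | h
    · rw [h]; exact hAt
    · exact hIco σ ⟨hσ.1, h⟩
  have hA't : ψ' t = Ψ' t := by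
    rcases eq_or_lt_of_le ht₀ with h | h
    · rw [← h, hinit', hInit']
    · have hu : UniqueDiffWithinAt ℝ (Icc r₀ t) t :=
        uniqueDiffOn_Icc h t (right_mem_Icc.2 ht₀)
      have hder1 : HasDerivWithinAt (fun σ => ψ σ - Ψ σ) (ψ' t - Ψ' t) (Icc r₀ t) t :=
        ((hd1 t htI).sub (hD1 t htI)).hasDerivWithinAt
      have hder2 : HasDerivWithinAt (fun σ => ψ σ - Ψ σ) 0 (Icc r₀ t) t := by
        apply (hasDerivWithinAt_const t (Icc r₀ t) (0:ℝ)).congr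
        · intro x hx; exact sub_eq_zero.2 (hA x hx)
        · exact sub_eq_zero.2 hAt
      have := UniqueDiffWithinAt.eq_deriv _ hu hder1 hder2
      linarith
  have htr₁ : t = r₁ := by
    by_contra hne
    have hlt : t < r₁ := lt_of_le_of_ne ht₁ hne
    obtain ⟨Q, hQ0, ε₀, hε₀, hε₀1, hε₀r, hb⟩ :
        ∃ Q ≥ 0, ∃ ε₀ > 0, ε₀ ≤ 1 ∧ t + ε₀ ≤ r₁ ∧ ∀ σ ∈ Icc t (t + ε₀),
          |f (ψ σ) - f (Ψ σ)| ≤ Q / Real.sqrt (σ - t) * |ψ σ - Ψ σ| := by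
      rcases eq_or_lt_of_le ht₀ with h | h
      · -- t = r₀ : singular case, use linear lower bound ψ σ ≥ (ψ₁/2)(σ-t)
        have hinit_t : ψ t = 0 := h ▸ hinit
        have hinit'_t : ψ' t = ψ₁ := h ▸ hinit'
        have hInit_t : Ψ t = 0 := h ▸ hInit
        have hInit'_t : Ψ' t = ψ₁ := h ▸ hInit'
        refine ⟨C / Real.sqrt (ψ₁/2), div_nonneg hC.le (Real.sqrt_nonneg _), ?_⟩
        have hev : ∀ᶠ s in nhdsWithin t (Icc r₀ r₁), ψ₁/2 < ψ' s ∧ ψ₁/2 < Ψ' s := by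
          have e1 : ∀ᶠ s in nhdsWithin t (Icc r₀ r₁), ψ₁/2 < ψ' s :=
            (hcψ' t htI).tendsto.eventually
              (eventually_gt_nhds (by rw [hinit'_t]; linarith))
          have e2 : ∀ᶠ s in nhdsWithin t (Icc r₀ r₁), ψ₁/2 < Ψ' s :=
            (hcΨ' t htI).tendsto.eventually
              (eventually_gt_nhds (by rw [hInit'_t]; linarith))
          exact e1.and e2
        obtain ⟨η, hη, hball⟩ := Metric.mem_nhdsWithin_iff.1 hev
        set ε₀ := min (η/2) (min 1 (r₁ - t)) with hε₀def
        have hεη : ε₀ < η := lt_of_le_of_lt (min_le_left _ _) (by linarith)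
        have hεr : t + ε₀ ≤ r₁ := by
          have := (min_le_right (η/2) (min 1 (r₁ - t))).trans (min_le_right 1 (r₁ - t))
          linarith
        have hεpos : 0 < ε₀ := lt_min (by positivity) (lt_min one_pos (by linarith))
        have hε1 : ε₀ ≤ 1 := (min_le_right _ _).trans (min_le_left _ _)
        refine ⟨ε₀, hεpos, hε1, hεr, ?_⟩
        have hsubI : Icc t (t + ε₀) ⊆ Icc r₀ r₁ :=
          fun x hx => ⟨ht₀.trans hx.1, hx.2.trans hεr⟩
        have hballmem : ∀ x ∈ Icc t (t + ε₀),
            ψ₁/2 < ψ' x ∧ ψ₁/2 < Ψ' x := by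
          intro x hx
          apply hball
          constructor
          · rw [Metric.mem_ball, Real.dist_eq,
              abs_of_nonneg (by linarith [hx.1] : (0:ℝ) ≤ x - t)]
            linarith [hx.2]
          · exact hsubI hx
        have hlow : ∀ x ∈ Icc t (t + ε₀), ψ₁/2 * (x - t) ≤ ψ x :=
          lin_lower_bound t (t + ε₀) (ψ₁/2) ψ ψ'
            (fun x hx => hd1 x (hsubI hx))
            (fun x hx => (hballmem x hx).1.le) hinit_t
        have hLow : ∀ x ∈ Icc t (t + ε₀), ψ₁/2 * (x - t) ≤ Ψ x :=
          lin_lower_bound t (t + ε₀) (ψ₁/2) Ψ Ψ'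
            (fun x hx => hD1 x (hsubI hx))
            (fun x hx => (hballmem x hx).2.le) hInit_t
        intro σ hσ
        rcases eq_or_lt_of_le hσ.1 with he | hgt
        · simp [← he, hinit_t, hInit_t]
        · have hσr₀ : r₀ < σ := lt_of_le_of_lt h.le hgt
          have hσIoc : σ ∈ Ioc r₀ r₁ := ⟨hσr₀, (hσ.2.trans hεr)⟩
          have h1 := hrange σ hσIoc
          have h2 := hRange σ hσIoc
          have hmin : ψ₁/2 * (σ - t) ≤ min |ψ σ| |Ψ σ| := by
            rw [abs_of_pos h1.1, abs_of_pos h2.1]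
            exact le_min (hlow σ hσ) (hLow σ hσ)
          have hminpos : 0 < ψ₁/2 * (σ - t) := by
            have : 0 < σ - t := by linarith
            positivity
          have hlipσ := hlip (ψ σ) (Ψ σ) (ne_of_gt h1.1) (ne_of_gt h2.1)
            (by rw [abs_of_pos h1.1]; exact h1.2)
            (by rw [abs_of_pos h2.1]; exact h2.2)
            (mul_pos h1.1 h2.1)
          have key : C / Real.sqrt (min |ψ σ| |Ψ σ|) ≤
              C / Real.sqrt (ψ₁/2) / Real.sqrt (σ - t) := by
            rw [div_div, ← Real.sqrt_mul (by positivity)]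
            gcongr
            all_goals first
              | exact Real.sqrt_le_sqrt hmin
              | exact Real.sqrt_pos.2 hminpos
              | positivity
          exact hlipσ.trans (mul_le_mul_of_nonneg_right key (abs_nonneg _))
      · -- t > r₀ : regular case, solutions stay ≥ m/2 near t
        have hmI : t ∈ Ioc r₀ r₁ := ⟨h, ht₁⟩
        have hm := hrange t hmI
        refine ⟨C / Real.sqrt (ψ t / 2), div_nonneg hC.le (Real.sqrt_nonneg _), ?_⟩
        have hev : ∀ᶠ s in nhdsWithin t (Icc r₀ r₁), ψ t / 2 < ψ s ∧ ψ t / 2 < Ψ s := by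
          have e1 : ∀ᶠ s in nhdsWithin t (Icc r₀ r₁), ψ t / 2 < ψ s :=
            (hcψ t htI).tendsto.eventually (eventually_gt_nhds (by linarith [hm.1]))
          have e2 : ∀ᶠ s in nhdsWithin t (Icc r₀ r₁), ψ t / 2 < Ψ s :=
            (hcΨ t htI).tendsto.eventually
              (eventually_gt_nhds (by rw [← hAt]; linarith [hm.1]))
          exact e1.and e2
        obtain ⟨η, hη, hball⟩ := Metric.mem_nhdsWithin_iff.1 hev
        set ε₀ := min (η/2) (min 1 (r₁ - t)) with hε₀def
        have hεη : ε₀ < η := lt_of_le_of_lt (min_le_left _ _) (by linarith)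
        have hε₀1 : ε₀ ≤ 1 := (min_le_right _ _).trans (min_le_left _ _)
        have hεr : t + ε₀ ≤ r₁ := by
          have := (min_le_right (η/2) (min 1 (r₁ - t))).trans (min_le_right 1 (r₁ - t))
          linarith
        have hεpos : 0 < ε₀ := lt_min (by positivity) (lt_min one_pos (by linarith))
        refine ⟨ε₀, hεpos, hε₀1, hεr, ?_⟩
        have hsubI : Icc t (t + ε₀) ⊆ Icc r₀ r₁ :=
          fun x hx => ⟨ht₀.trans hx.1, hx.2.trans hεr⟩
        have hballmem : ∀ x ∈ Icc t (t + ε₀), ψ t / 2 < ψ x ∧ ψ t / 2 < Ψ x := by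
          intro x hx
          apply hball
          refine ⟨?_, hsubI hx⟩
          rw [Metric.mem_ball, Real.dist_eq,
            abs_of_nonneg (by linarith [hx.1] : (0:ℝ) ≤ x - t)]
          linarith [hx.2]
        intro σ hσ
        rcases eq_or_lt_of_le hσ.1 with he | hgt
        · simp [← he, hAt]
        · have hσIoc : σ ∈ Ioc r₀ r₁ := ⟨h.trans hgt, hσ.2.trans hεr⟩
          have h1 := hrange σ hσIoc
          have h2 := hRange σ hσIoc
          have hbm := hballmem σ hσ
          have hmin : ψ t / 2 ≤ min |ψ σ| |Ψ σ| := by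
            rw [abs_of_pos h1.1, abs_of_pos h2.1]
            exact le_min hbm.1.le hbm.2.le
          have hminpos : 0 < ψ t / 2 := by linarith [hm.1]
          have hlipσ := hlip (ψ σ) (Ψ σ) (ne_of_gt h1.1) (ne_of_gt h2.1)
            (by rw [abs_of_pos h1.1]; exact h1.2)
            (by rw [abs_of_pos h2.1]; exact h2.2)
            (mul_pos h1.1 h2.1)
          have key : C / Real.sqrt (min |ψ σ| |Ψ σ|) ≤ C / Real.sqrt (ψ t / 2) := by
            gcongr
            all_goals first
              | exact Real.sqrt_le_sqrt hmin
              | exact Real.sqrt_pos.2 hminpos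
              | positivity
          have hst : 0 < Real.sqrt (σ - t) := Real.sqrt_pos.2 (by linarith)
          have hst1 : Real.sqrt (σ - t) ≤ 1 :=
            Real.sqrt_le_one.2 (by linarith [hσ.2, hε₀1])
          have key2 : C / Real.sqrt (ψ t / 2) ≤
              C / Real.sqrt (ψ t / 2) / Real.sqrt (σ - t) := by
            rw [le_div_iff₀ hst]
            nlinarith [div_nonneg hC.le (Real.sqrt_nonneg (ψ t / 2))]
          calc |f (ψ σ) - f (Ψ σ)|
              ≤ C / Real.sqrt (min |ψ σ| |Ψ σ|) * |ψ σ - Ψ σ| := hlipσ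
            _ ≤ C / Real.sqrt (ψ t / 2) / Real.sqrt (σ - t) * |ψ σ - Ψ σ| :=
                mul_le_mul_of_nonneg_right (key.trans key2) (abs_nonneg _)
    -- now shrink ε and apply the step lemma
    set ε := min ε₀ (1 / (2 * (1 + Q))) with hεdef
    have hεpos : 0 < ε := lt_min hε₀ (by positivity)
    have hεle : ε ≤ ε₀ := min_le_left _ _
    have hsmall : (1 + Q * Real.sqrt ε) * ε ≤ 1/2 := by
      have h1 : Real.sqrt ε ≤ 1 := Real.sqrt_le_one.2 (hεle.trans hε₀1)
      have h2 : ε ≤ 1 / (2 * (1 + Q)) := min_le_right _ _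
      have h3 : (1 + Q * Real.sqrt ε) ≤ 1 + Q := by nlinarith [Real.sqrt_nonneg ε]
      calc (1 + Q * Real.sqrt ε) * ε ≤ (1 + Q) * (1 / (2 * (1 + Q))) :=
            mul_le_mul h3 h2 hεpos.le (by linarith)
        _ = 1/2 := by field_simp
    have hsub : Icc t (t + ε) ⊆ Icc r₀ r₁ := fun x hx =>
      ⟨ht₀.trans hx.1, hx.2.trans (by linarith [min_le_left ε₀ (1 / (2 * (1 + Q)))])⟩
    have hsub' : Icc t (t + ε) ⊆ Icc t (t + ε₀) := fun x hx =>
      ⟨hx.1, hx.2.trans (by linarith)⟩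
    have hstep := step_lemma t ε Q hεpos hQ0 hsmall
      (fun r => ψ r - Ψ r) (fun r => ψ' r - Ψ' r) (fun r => ψ'' r - Ψ'' r)
      (fun σ hσ => (hd1 σ (hsub hσ)).sub (hD1 σ (hsub hσ)))
      (fun σ hσ => (hd2 σ (hsub hσ)).sub (hD2 σ (hsub hσ)))
      (sub_eq_zero.2 hAt) (sub_eq_zero.2 hA't)
      (by
        intro σ hσ
        show |ψ'' σ - Ψ'' σ| ≤ |ψ' σ - Ψ' σ| + Q / Real.sqrt (σ - t) * |ψ σ - Ψ σ|
        have hσI := hsub hσ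
        have hσ1 : (1:ℝ) ≤ σ := hr₀.trans hσI.1
        have e1 := hode σ hσI
        have e2 := hOde σ hσI
        have he : ψ'' σ - Ψ'' σ = -((ψ' σ - Ψ' σ) / σ) - (f (ψ σ) - f (Ψ σ)) := by
          have : (ψ' σ - Ψ' σ) / σ = ψ' σ / σ - Ψ' σ / σ := sub_div _ _ _
          rw [this]; linarith
        rw [he]
        calc |(-((ψ' σ - Ψ' σ) / σ) - (f (ψ σ) - f (Ψ σ)))|
            ≤ |(-((ψ' σ - Ψ' σ) / σ))| + |f (ψ σ) - f (Ψ σ)| := abs_sub _ _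
          _ = |ψ' σ - Ψ' σ| / σ + |f (ψ σ) - f (Ψ σ)| := by
              rw [abs_neg, abs_div, abs_of_pos (by linarith : (0:ℝ) < σ)]
          _ ≤ |ψ' σ - Ψ' σ| + Q / Real.sqrt (σ - t) * |ψ σ - Ψ σ| := by
              have hd : |ψ' σ - Ψ' σ| / σ ≤ |ψ' σ - Ψ' σ| :=
                div_le_self (abs_nonneg _) hσ1
              have := hb σ (hsub' hσ)
              linarith)
    have hTmem : t + ε ∈ T := by
      refine ⟨⟨by linarith, by linarith⟩, fun σ hσ => ?_⟩
      rcases le_total σ t with hl | hl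
      · exact hA σ ⟨hσ.1, hl⟩
      · have h0 : ψ σ - Ψ σ = 0 := hstep σ ⟨hl, hσ.2⟩
        linarith
    have := le_csSup hbdd hTmem
    linarith
  intro r hr
  exact hA r ⟨hr.1, htr₁ ▸ hr.2⟩
end
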